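/- arXiv:1010.2356 — 2 statements merged into one kernel-verified Lean document; each statement's English description precedes it below -/
import Mathlib

section
/- There is a finite constant C₀ such that for all integers J ≥ 1 and all θ ∈ B(π) with θ ≠ 0, sup_{K > J} |∑_{y ∈ D_K \ D_J} e^{i θ·y} / |y|²| ≤ C₀ / (1 ∧ (J ‖θ‖_∞)), where the supremum is over integers K > J. -/
open Filter MeasureTheory Real Finset
open scoped BigOperators

noncomputable section

/-- `T_k = (−k/2, k/2]² ∩ ℤ²`. -/
def Tset (k : ℝ) : Finset (ℤ × ℤ) :=
  Finset.Ioc ⌊-k / 2⌋ ⌊k / 2⌋ ×ˢ Finset.Ioc ⌊-k / 2⌋ ⌊k / 2⌋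

/-- `Λ_k = [−k/2, k/2]² ∩ ℤ²`. -/
def Lam (k : ℝ) : Finset (ℤ × ℤ) :=
  Finset.Icc ⌈-k / 2⌉ ⌊k / 2⌋ ×ˢ Finset.Icc ⌈-k / 2⌉ ⌊k / 2⌋

open scoped Classical in
/-- `D_k = {x ∈ ℤ² : |x| ≤ k/2}` (Euclidean norm). -/
def Dset (k : ℝ) : Finset (ℤ × ℤ) :=
  (Lam k).filter fun x => Real.sqrt ((x.1 : ℝ) ^ 2 + (x.2 : ℝ) ^ 2) ≤ k / 2

/-- sup (ℓ∞) norm on ℝ². -/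
def supNorm (θ : ℝ × ℝ) : ℝ := max |θ.1| |θ.2|

/-- the closed ℓ∞-ball `B(r)` in ℝ². -/
def Bset (r : ℝ) : Set (ℝ × ℝ) := {θ | supNorm θ ≤ r}

/-- squared Euclidean norm `|θ|²` on ℝ². -/
def sqNormR (θ : ℝ × ℝ) : ℝ := θ.1 ^ 2 + θ.2 ^ 2

/-- squared Euclidean norm `|y|²` of a lattice point. -/
def sqNorm (y : ℤ × ℤ) : ℝ := (y.1 : ℝ) ^ 2 + (y.2 : ℝ) ^ 2

/-- dot product `θ · x` of θ ∈ ℝ² and x ∈ ℤ². -/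
def dotP (θ : ℝ × ℝ) (x : ℤ × ℤ) : ℝ := θ.1 * x.1 + θ.2 * x.2

/-- `e^{iθ·x}`. -/
def cexp (θ : ℝ × ℝ) (x : ℤ × ℤ) : ℂ := Complex.exp (Complex.I * (dotP θ x : ℂ))

/-- `e^{2πi x·y/L}`. -/
def eL (L : ℕ) (x y : ℤ × ℤ) : ℂ :=
  Complex.exp (2 * (π : ℂ) * Complex.I * ((x.1 * y.1 + x.2 * y.2 : ℤ) : ℂ) / (L : ℂ))

/-- the filter of large even natural numbers. -/
def evenAtTop : Filter ℕ := Filter.atTop ⊓ Filter.principal {n | Even n}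

/-- the Fourier point `2πy/L ∈ ℝ²`. -/
def fourierTheta (L : ℕ) (y : ℤ × ℤ) : ℝ × ℝ := (2 * π * y.1 / L, 2 * π * y.2 / L)

/-- the characteristic function `φ(θ) = ∑_x e^{iθ·x} q(x)` of a jump distribution
supported in `Λ_m`; it is real-valued by symmetry, so we take the real part. -/
def phiOf (m : ℕ) (qq : ℤ × ℤ → ℝ) (θ : ℝ × ℝ) : ℝ :=
  (∑ x ∈ Lam m, cexp θ x * (qq x : ℂ)).re

/-!
Let `θ₁` be the coordinate with `|θ₁| = ‖θ‖_∞` and sum over the annulus row by row, i.e. over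
`y = (i, j)` with `j` fixed. On each half `i ≥ 0`, `i < 0` of a row the points form an interval of
integers on which the weight `1/|y|²` is monotone in `|i|`, so Abel summation against the geometric
sums `∑ e^{ikθ₁}`, all bounded by `π/|θ₁|`, bounds the row by `2π/|θ₁| · min(1/j², 4/J²)`.
Summing over `j` costs a factor `O(1/J)`.
-/

open Complex in
theorem two_mul_abs_div_pi_le_norm_exp_I_mul_sub_one {x : ℝ} (hx : |x| ≤ π) :
    2 * |x| / π ≤ ‖exp (I * x) - 1‖ := by
  have h_abs : |Real.sin (x / 2)| = |Real.sin (|x| / 2)| := by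
    rcases abs_choice x with h | h <;> simp [h, neg_div, Real.sin_neg]
  have h_sin : 2 / π * (|x| / 2) ≤ Real.sin (|x| / 2) :=
    Real.mul_le_sin (by positivity) (by linarith)
  rw [norm_exp_I_mul_ofReal_sub_one, norm_mul, Real.norm_eq_abs, Real.norm_eq_abs, h_abs,
    abs_two]
  calc 2 * |x| / π = 2 * (2 / π * (|x| / 2)) := by ring
    _ ≤ 2 * |Real.sin (|x| / 2)| := by gcongr; exact h_sin.trans (le_abs_self _)

theorem norm_geom_sum_Icc_le {K : Type*} [NormedField K] {w : K} (hw : ‖w‖ = 1) (hw1 : w ≠ 1)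
    (a b : ℕ) : ‖∑ k ∈ Icc a b, w ^ k‖ ≤ 2 / ‖w - 1‖ := by
  rcases lt_or_ge b a with hba | hab
  · rw [Icc_eq_empty_of_lt hba, sum_empty, norm_zero]
    positivity
  rw [← Ico_add_one_right_eq_Icc, geom_sum_Ico hw1 (by omega), norm_div]
  gcongr
  calc ‖w ^ (b + 1) - w ^ a‖ ≤ ‖w ^ (b + 1)‖ + ‖w ^ a‖ := norm_sub_le _ _
    _ = 2 := by simp [norm_pow, hw]; norm_num

open Complex in
theorem norm_sum_Icc_exp_I_mul_pow_le {α : ℝ} (hα : α ≠ 0) (hαπ : |α| ≤ π) (a b : ℕ) :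
    ‖∑ k ∈ Icc a b, exp (I * α) ^ k‖ ≤ π / |α| := by
  have h_lower := two_mul_abs_div_pi_le_norm_exp_I_mul_sub_one hαπ
  have h_pos : 0 < 2 * |α| / π := by positivity
  have hw1 : exp (I * α) ≠ 1 := fun h => by simp [h] at h_lower; linarith
  calc ‖∑ k ∈ Icc a b, exp (I * α) ^ k‖ ≤ 2 / ‖exp (I * α) - 1‖ :=
        norm_geom_sum_Icc_le (norm_exp_I_mul_ofReal α) hw1 a b
    _ ≤ 2 / (2 * |α| / π) := by gcongr
    _ = π / |α| := by field_simp

theorem Finset.eq_Icc_min'_max'_of_ordConnected {α : Type*} [LinearOrder α] [LocallyFiniteOrder α]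
    {s : Finset α} (hs : (s : Set α).OrdConnected) (hne : s.Nonempty) :
    s = Icc (s.min' hne) (s.max' hne) := by
  ext x
  refine ⟨fun hx => mem_Icc.2 ⟨s.min'_le x hx, s.le_max' x hx⟩, fun hx => ?_⟩
  exact hs.out (s.min'_mem hne) (s.max'_mem hne) (by simpa using hx)

section Abel

variable {E : Type*} [SeminormedAddCommGroup E] [NormedSpace ℝ E] {z : ℕ → E} {M : ℝ}
  {f : ℕ → ℝ}

theorem norm_sum_Icc_smul_le_of_antitoneOn (hz : ∀ a b, ‖∑ k ∈ Icc a b, z k‖ ≤ M) {a b : ℕ}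
    (hab : a ≤ b) (hf : AntitoneOn f (Icc a b)) (hfb : 0 ≤ f b) :
    ‖∑ k ∈ Icc a b, f k • z k‖ ≤ M * f a := by
  induction b, hab using Nat.le_induction generalizing f with
  | base =>
    rw [Icc_self, sum_singleton, norm_smul, Real.norm_of_nonneg hfb, mul_comm]
    exact mul_le_mul_of_nonneg_right (by simpa using hz a a) hfb
  | succ b hab ih =>
    have hmem : ∀ {k}, k ∈ Icc a b → k ∈ Icc a (b + 1) := fun hk => by
      simp only [mem_Icc] at hk ⊢; omega
    have hb1 : b + 1 ∈ Icc a (b + 1) := by simp; omega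
    -- split off `f (b + 1)` times the whole interval sum; the rest is the case `f - f (b + 1)`
    have h_split : ∑ k ∈ Icc a (b + 1), f k • z k =
        ∑ k ∈ Icc a b, (f k - f (b + 1)) • z k + f (b + 1) • ∑ k ∈ Icc a (b + 1), z k := by
      simp only [sub_smul, sum_sub_distrib, ← smul_sum, sum_Icc_succ_top (by omega : a ≤ b + 1),
        smul_add]
      abel
    have h_ih := ih (f := fun k => f k - f (b + 1))
      (fun k hk l hl hkl => by simpa using hf (hmem hk) (hmem hl) hkl)
      (by simpa using hf (hmem (by simp; omega)) hb1 (by omega))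
    calc ‖∑ k ∈ Icc a (b + 1), f k • z k‖
        ≤ M * (f a - f (b + 1)) + f (b + 1) * M := by
          rw [h_split]
          refine (norm_add_le _ _).trans (add_le_add h_ih ?_)
          rw [norm_smul, Real.norm_of_nonneg hfb]
          exact mul_le_mul_of_nonneg_left (hz _ _) hfb
      _ = M * f a := by ring

theorem norm_sum_smul_le_of_antitoneOn_of_ordConnected (hz : ∀ a b, ‖∑ k ∈ Icc a b, z k‖ ≤ M)
    {s : Finset ℕ} (hs : (s : Set ℕ).OrdConnected) (hf : AntitoneOn f s)
    (hf0 : ∀ k ∈ s, 0 ≤ f k) {c : ℝ} (hc : 0 ≤ c) (hfc : ∀ k ∈ s, f k ≤ c) :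
    ‖∑ k ∈ s, f k • z k‖ ≤ M * c := by
  have hM : 0 ≤ M := by simpa using hz 1 0
  rcases s.eq_empty_or_nonempty with rfl | hne
  · simpa using mul_nonneg hM hc
  have h_Icc := s.eq_Icc_min'_max'_of_ordConnected hs hne
  rw [h_Icc] at hf ⊢
  calc ‖∑ k ∈ Icc (s.min' hne) (s.max' hne), f k • z k‖ ≤ M * f (s.min' hne) :=
        norm_sum_Icc_smul_le_of_antitoneOn hz (s.min'_le _ (s.max'_mem hne)) hf
          (hf0 _ (s.max'_mem hne))
    _ ≤ M * c := mul_le_mul_of_nonneg_left (hfc _ (s.min'_mem hne)) hM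

end Abel

theorem sum_Icc_neg_natCast_eq {M : Type*} [AddCommMonoid M] (g : ℤ → M) (n : ℕ) :
    ∑ i ∈ Icc (-(n : ℤ)) n, g i = ∑ k ∈ Icc 0 n, g k + ∑ k ∈ Icc 1 n, g (-k) := by
  induction n with
  | zero => simp
  | succ n ih =>
    have h_Icc : Icc (-((n + 1 : ℕ) : ℤ)) (n + 1 : ℕ) =
        insert ((n + 1 : ℕ) : ℤ) (insert (-((n + 1 : ℕ) : ℤ)) (Icc (-(n : ℤ)) n)) := by
      ext; simp; omega
    rw [sum_Icc_succ_top (by omega), sum_Icc_succ_top (by omega), h_Icc,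
      sum_insert (by simp; omega), sum_insert (by simp), ih]
    abel

theorem sqNorm_natCast (k : ℕ) (j : ℤ) : sqNorm ((k : ℤ), j) = (k : ℝ) ^ 2 + (j : ℝ) ^ 2 := by
  simp [sqNorm]

theorem sqNorm_natCast_mono {k l : ℕ} (hkl : k ≤ l) (j : ℤ) :
    sqNorm ((k : ℤ), j) ≤ sqNorm ((l : ℤ), j) := by
  rw [sqNorm_natCast, sqNorm_natCast]
  gcongr

theorem sqNorm_neg_fst (y : ℤ × ℤ) : sqNorm (-y.1, y.2) = sqNorm y := by
  simp [sqNorm]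

theorem sqNorm_swap (y : ℤ × ℤ) : sqNorm y.swap = sqNorm y := by
  simp [sqNorm, add_comm]

theorem cexp_neg_fst (θ : ℝ × ℝ) (y : ℤ × ℤ) : cexp θ (-y.1, y.2) = cexp (-θ.1, θ.2) y := by
  simp [cexp, dotP]

theorem cexp_swap (θ : ℝ × ℝ) (y : ℤ × ℤ) : cexp θ.swap y.swap = cexp θ y := by
  simp [cexp, dotP, add_comm]

theorem cexp_natCast_eq (θ : ℝ × ℝ) (k : ℕ) (j : ℤ) :
    cexp θ ((k : ℤ), j) =
      Complex.exp (Complex.I * (θ.2 * j : ℝ)) * Complex.exp (Complex.I * θ.1) ^ k := by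
  rw [← Complex.exp_nat_mul, ← Complex.exp_add, cexp, dotP]
  push_cast
  ring_nf

theorem mem_Dset_iff {k : ℝ} (hk : 0 ≤ k) {y : ℤ × ℤ} : y ∈ Dset k ↔ sqNorm y ≤ (k / 2) ^ 2 := by
  have hk2 : 0 ≤ k / 2 := by positivity
  simp only [Dset, Lam, mem_filter, mem_product, mem_Icc, Int.ceil_le, Int.le_floor,
    Real.sqrt_le_left hk2, sqNorm]
  refine ⟨And.right, fun h => ⟨?_, h⟩⟩
  have h1 := abs_le_of_sq_le_sq' (a := (y.1 : ℝ)) (by nlinarith [sq_nonneg (y.2 : ℝ)]) hk2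
  have h2 := abs_le_of_sq_le_sq' (a := (y.2 : ℝ)) (by nlinarith [sq_nonneg (y.1 : ℝ)]) hk2
  rw [neg_div]
  exact ⟨h1, h2⟩

theorem mem_Dset_sdiff_iff {J K : ℝ} (hJ : 0 ≤ J) (hK : 0 ≤ K) {y : ℤ × ℤ} :
    y ∈ Dset K \ Dset J ↔ (J / 2) ^ 2 < sqNorm y ∧ sqNorm y ≤ (K / 2) ^ 2 := by
  rw [Finset.mem_sdiff, mem_Dset_iff hK, mem_Dset_iff hJ, not_le, and_comm]

theorem swap_mem_Dset_iff {k : ℝ} {y : ℤ × ℤ} : y.swap ∈ Dset k ↔ y ∈ Dset k := by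
  simp only [Dset, Lam, mem_filter, mem_product, Prod.fst_swap, Prod.snd_swap, add_comm]
  tauto

theorem Dset_subset_Icc (K : ℕ) : Dset K ⊆ Icc (-(K : ℤ)) K ×ˢ Icc (-(K : ℤ)) K := by
  intro y hy
  have h := (mem_Dset_iff (Nat.cast_nonneg K)).1 hy
  simp only [sqNorm] at h
  have hK : (0 : ℝ) ≤ K := Nat.cast_nonneg K
  have h1 := abs_le_of_sq_le_sq' (a := (y.1 : ℝ)) (b := K) (by nlinarith [sq_nonneg (y.2 : ℝ)]) hK
  have h2 := abs_le_of_sq_le_sq' (a := (y.2 : ℝ)) (b := K) (by nlinarith [sq_nonneg (y.1 : ℝ)]) hK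
  simp only [mem_product, mem_Icc]
  exact ⟨by exact_mod_cast h1, by exact_mod_cast h2⟩

theorem ordConnected_annulus_row {J K : ℝ} (hJ : 0 < J) (hK : 0 ≤ K) (j : ℤ) (m n : ℕ) :
    (((Icc m n).filter fun k : ℕ => ((k : ℤ), j) ∈ Dset K \ Dset J : Finset ℕ) :
      Set ℕ).OrdConnected := by
  refine Set.ordConnected_def.2 fun k hk l hl i hi => ?_
  simp only [coe_filter, Set.mem_ofPred_eq, mem_Icc, mem_Dset_sdiff_iff hJ.le hK] at hk hl ⊢
  have h_ki := sqNorm_natCast_mono hi.1 j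
  have h_il := sqNorm_natCast_mono hi.2 j
  refine ⟨⟨?_, ?_⟩, ?_, ?_⟩ <;> linarith [hi.1, hi.2]

theorem norm_sum_annulus_halfRow_le {J K : ℝ} (hJ : 0 < J) (hK : 0 ≤ K) (j : ℤ) {θ : ℝ × ℝ}
    (hθ : θ.1 ≠ 0) (hθπ : |θ.1| ≤ π) (m n : ℕ) :
    ‖∑ k ∈ Icc m n, if ((k : ℤ), j) ∈ Dset K \ Dset J
        then cexp θ (k, j) / (sqNorm (k, j) : ℂ) else 0‖
      ≤ π / |θ.1| * (max ((j : ℝ) ^ 2) ((J / 2) ^ 2))⁻¹ := by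
  have h_term : ∀ k : ℕ, cexp θ (k, j) / (sqNorm (k, j) : ℂ) =
      Complex.exp (Complex.I * (θ.2 * j : ℝ)) *
        ((sqNorm (k, j))⁻¹ • Complex.exp (Complex.I * θ.1) ^ k) := by
    intro k
    rw [cexp_natCast_eq, Complex.real_smul, Complex.ofReal_inv]
    ring
  rw [← sum_filter]
  simp_rw [h_term, ← mul_sum, norm_mul, Complex.norm_exp_I_mul_ofReal, one_mul]
  have h_mem : ∀ k ∈ (Icc m n).filter fun k : ℕ => ((k : ℤ), j) ∈ Dset K \ Dset J,
      (J / 2) ^ 2 < sqNorm (k, j) := fun k hk =>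
    ((mem_Dset_sdiff_iff hJ.le hK).1 (mem_filter.1 hk).2).1
  have h_pos : 0 < max ((j : ℝ) ^ 2) ((J / 2) ^ 2) := lt_max_of_lt_right (by positivity)
  refine norm_sum_smul_le_of_antitoneOn_of_ordConnected (norm_sum_Icc_exp_I_mul_pow_le hθ hθπ)
    (ordConnected_annulus_row hJ hK j m n) ?_ (fun k _ => ?_) (inv_nonneg.2 h_pos.le) ?_
  · intro k hk l hl hkl
    exact inv_anti₀ ((sq_pos_of_pos (by positivity)).trans (h_mem k hk))
      (sqNorm_natCast_mono hkl j)
  · exact inv_nonneg.2 (by rw [sqNorm_natCast]; positivity)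
  · intro k hk
    refine inv_anti₀ h_pos (max_le ?_ (h_mem k hk).le)
    rw [sqNorm_natCast]
    nlinarith

theorem norm_sum_annulus_row_le {J : ℝ} (hJ : 0 < J) (K : ℕ) (j : ℤ) {θ : ℝ × ℝ}
    (hθ : θ.1 ≠ 0) (hθπ : |θ.1| ≤ π) :
    ‖∑ i ∈ Icc (-(K : ℤ)) K, if (i, j) ∈ Dset K \ Dset J
        then cexp θ (i, j) / (sqNorm (i, j) : ℂ) else 0‖
      ≤ 2 * (π / |θ.1| * (max ((j : ℝ) ^ 2) ((J / 2) ^ 2))⁻¹) := by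
  have hK : (0 : ℝ) ≤ K := Nat.cast_nonneg K
  have h_reflect : ∀ k : ℕ, ((-(k : ℤ), j) ∈ Dset K \ Dset J ↔ ((k : ℤ), j) ∈ Dset K \ Dset J) ∧
      cexp θ (-(k : ℤ), j) / (sqNorm (-(k : ℤ), j) : ℂ) =
        cexp (-θ.1, θ.2) (k, j) / (sqNorm (k, j) : ℂ) := fun k => by
    simp only [mem_Dset_sdiff_iff hJ.le hK, sqNorm_neg_fst ((k : ℤ), j),
      cexp_neg_fst θ ((k : ℤ), j), and_self]
  simp only [sum_Icc_neg_natCast_eq, h_reflect]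
  refine (norm_add_le _ _).trans ?_
  rw [two_mul]
  gcongr
  · exact norm_sum_annulus_halfRow_le hJ hK j hθ hθπ 0 K
  · simpa using norm_sum_annulus_halfRow_le hJ hK j (θ := (-θ.1, θ.2)) (by simpa) (by simpa) 1 K

theorem sum_Icc_inv_max_sq_le {J : ℕ} (hJ : 1 ≤ J) (n : ℕ) :
    ∑ k ∈ Icc 0 n, (max ((k : ℝ) ^ 2) ((J / 2) ^ 2))⁻¹ ≤ 10 / J := by
  have hJ0 : (0 : ℝ) < J := by exact_mod_cast hJ
  have h_disj : Disjoint (Icc 0 J) (Ioo J (n + 1)) :=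
    disjoint_left.2 fun k hk hk' => by simp only [mem_Icc, mem_Ioo] at hk hk'; omega
  have h_near : ∀ k ∈ Icc 0 J, (max ((k : ℝ) ^ 2) ((J / 2) ^ 2))⁻¹ ≤ 4 / J ^ 2 := fun k _ => by
    calc (max ((k : ℝ) ^ 2) ((J / 2) ^ 2))⁻¹ ≤ ((J / 2 : ℝ) ^ 2)⁻¹ :=
          inv_anti₀ (by positivity) (le_max_right _ _)
      _ = 4 / J ^ 2 := by ring
  have h_far : ∀ k ∈ Ioo J (n + 1), (max ((k : ℝ) ^ 2) ((J / 2) ^ 2))⁻¹ ≤ ((k : ℝ) ^ 2)⁻¹ :=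
    fun k hk => by
      have hk0 : (0 : ℝ) < k := Nat.cast_pos.2 (by have := (mem_Ioo.1 hk).1; omega)
      exact inv_anti₀ (by positivity) (le_max_left _ _)
  calc ∑ k ∈ Icc 0 n, (max ((k : ℝ) ^ 2) ((J / 2) ^ 2))⁻¹
      ≤ ∑ k ∈ Icc 0 J ∪ Ioo J (n + 1), (max ((k : ℝ) ^ 2) ((J / 2) ^ 2))⁻¹ :=
        sum_le_sum_of_subset_of_nonneg
          (fun k hk => by simp only [mem_union, mem_Icc, mem_Ioo] at hk ⊢; omega)
          (fun k _ _ => by positivity)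
    _ ≤ ∑ _k ∈ Icc 0 J, 4 / (J : ℝ) ^ 2 + ∑ k ∈ Ioo J (n + 1), ((k : ℝ) ^ 2)⁻¹ := by
        rw [sum_union h_disj]
        exact add_le_add (sum_le_sum h_near) (sum_le_sum h_far)
    _ ≤ (J + 1) * (4 / J ^ 2) + 2 / (J + 1) := by
        rw [sum_const, Nat.card_Icc, nsmul_eq_mul]
        push_cast
        gcongr
        exact sum_Ioo_inv_sq_le J (n + 1)
    _ ≤ (2 * J) * (4 / J ^ 2) + 2 / J := by
        have hJ1 : (1 : ℝ) ≤ J := by exact_mod_cast hJ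
        gcongr <;> linarith
    _ = 10 / J := by field_simp; ring

theorem sum_Icc_neg_inv_max_sq_le {J : ℕ} (hJ : 1 ≤ J) (n : ℕ) :
    ∑ j ∈ Icc (-(n : ℤ)) n, (max ((j : ℝ) ^ 2) ((J / 2) ^ 2))⁻¹ ≤ 20 / J := by
  rw [sum_Icc_neg_natCast_eq]
  push_cast
  simp only [neg_sq]
  have h_sub : ∑ k ∈ Icc 1 n, (max ((k : ℝ) ^ 2) ((J / 2) ^ 2))⁻¹ ≤
      ∑ k ∈ Icc 0 n, (max ((k : ℝ) ^ 2) ((J / 2) ^ 2))⁻¹ :=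
    sum_le_sum_of_subset_of_nonneg (Icc_subset_Icc_left zero_le_one) fun _ _ _ => by positivity
  have h_main := sum_Icc_inv_max_sq_le hJ n
  exact (add_le_add h_main (h_sub.trans h_main)).trans_eq (by ring)

theorem norm_sum_annulus_le {J : ℕ} (hJ : 1 ≤ J) (K : ℕ) {θ : ℝ × ℝ} (hθ : θ.1 ≠ 0)
    (hθπ : |θ.1| ≤ π) :
    ‖∑ y ∈ Dset K \ Dset J, cexp θ y / (sqNorm y : ℂ)‖ ≤ 40 * π / (J * |θ.1|) := by
  have h_box : Dset K \ Dset J ⊆ Icc (-(K : ℤ)) K ×ˢ Icc (-(K : ℤ)) K :=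
    sdiff_subset.trans (Dset_subset_Icc K)
  rw [← inter_eq_right.2 h_box, ← sum_ite_mem, sum_product_right]
  calc ‖∑ j ∈ Icc (-(K : ℤ)) K, ∑ i ∈ Icc (-(K : ℤ)) K,
        if (i, j) ∈ Dset K \ Dset J then cexp θ (i, j) / (sqNorm (i, j) : ℂ) else 0‖
      ≤ ∑ j ∈ Icc (-(K : ℤ)) K, 2 * (π / |θ.1| * (max ((j : ℝ) ^ 2) ((J / 2) ^ 2))⁻¹) :=
        (norm_sum_le _ _).trans (sum_le_sum fun j _ =>
          norm_sum_annulus_row_le (Nat.cast_pos.2 hJ) K j hθ hθπ)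
    _ = 2 * π / |θ.1| * ∑ j ∈ Icc (-(K : ℤ)) K, (max ((j : ℝ) ^ 2) ((J / 2) ^ 2))⁻¹ := by
        rw [mul_sum]
        exact sum_congr rfl fun j _ => by ring
    _ ≤ 2 * π / |θ.1| * (20 / J) := by
        gcongr
        exact sum_Icc_neg_inv_max_sq_le hJ K
    _ = 40 * π / (J * |θ.1|) := by ring

theorem sum_annulus_swap (J K : ℝ) (θ : ℝ × ℝ) :
    ∑ y ∈ Dset K \ Dset J, cexp θ y / (sqNorm y : ℂ) =
      ∑ y ∈ Dset K \ Dset J, cexp θ.swap y / (sqNorm y : ℂ) :=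
  sum_equiv (Equiv.prodComm ℤ ℤ) (fun y => by simp [swap_mem_Dset_iff])
    fun y _ => by simp [← cexp_swap θ.swap y.swap, sqNorm_swap]

theorem supNorm_pos {θ : ℝ × ℝ} (hθ : θ ≠ 0) : 0 < supNorm θ := by
  by_contra! h
  have h1 : |θ.1| ≤ 0 := (le_max_left _ _).trans h
  have h2 : |θ.2| ≤ 0 := (le_max_right _ _).trans h
  exact hθ (Prod.ext (abs_nonpos_iff.1 h1) (abs_nonpos_iff.1 h2))

theorem norm_sum_annulus_le_supNorm {J : ℕ} (hJ : 1 ≤ J) (K : ℕ) {θ : ℝ × ℝ} (hθ : θ ≠ 0)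
    (hθπ : supNorm θ ≤ π) :
    ‖∑ y ∈ Dset K \ Dset J, cexp θ y / (sqNorm y : ℂ)‖ ≤ 40 * π / (J * supNorm θ) := by
  have h_pos := supNorm_pos hθ
  rcases le_total |θ.2| |θ.1| with h | h
  · have h_eq : supNorm θ = |θ.1| := max_eq_left h
    rw [h_eq] at h_pos hθπ ⊢
    exact norm_sum_annulus_le hJ K (abs_pos.1 h_pos) hθπ
  · have h_eq : supNorm θ = |θ.2| := max_eq_right h
    rw [h_eq] at h_pos hθπ ⊢
    rw [sum_annulus_swap]
    exact norm_sum_annulus_le hJ K (abs_pos.1 h_pos) hθπ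

/-- There is a finite constant `C₀` such that for all integers `J ≥ 1`, all
`θ ∈ B(π)` with `θ ≠ 0`, and all integers `K > J`,
`|∑_{y ∈ D_K \ D_J} e^{iθ·y}/|y|²| ≤ C₀ / (1 ∧ (J‖θ‖_∞))`. -/
theorem sum_exp_annulus_bound :
    ∃ C₀ : ℝ, ∀ J : ℕ, 1 ≤ J → ∀ θ : ℝ × ℝ, supNorm θ ≤ π → θ ≠ 0 →
      ∀ K : ℕ, J < K →
        ‖∑ y ∈ Dset K \ Dset J, cexp θ y / (sqNorm y : ℂ)‖
          ≤ C₀ / min 1 (J * supNorm θ) := by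
  refine ⟨40 * π, fun J hJ θ hθπ hθ K _ => ?_⟩
  have h_pos : 0 < (J : ℝ) * supNorm θ := mul_pos (by exact_mod_cast hJ) (supNorm_pos hθ)
  calc ‖∑ y ∈ Dset K \ Dset J, cexp θ y / (sqNorm y : ℂ)‖ ≤ 40 * π / (J * supNorm θ) :=
        norm_sum_annulus_le_supNorm hJ K hθ hθπ
    _ ≤ 40 * π / min 1 (J * supNorm θ) :=
        div_le_div_of_nonneg_left (by positivity) (lt_min one_pos h_pos) (min_le_right _ _)
end
end

section
/- Let f be a positive continuous function on B(1/2) = {x ∈ ℝ² : ‖x‖_∞ ≤ 1/2} with f(x₁,x₂) = f(x₂,x₁) = f(−x₁,x₂), and for each even positive integer M let q_M(x) = c_M f(x/M) u_M(x) with c_M > 0 chosen so that ∑_x q_M(x) = 1, and let φ_M(θ) = ∑_{x ∈ ℤ²} e^{iθ·x} q_M(x). Then for all real numbers 0 < δ < A < ∞ there exists ζ > 0 such that limsup_{M→∞} sup_{θ ∈ B(A/M) \ B(δ/M)} φ_M(θ) ≤ 1 − ζ. -/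
open Filter MeasureTheory Real Finset
open scoped BigOperators

noncomputable section

/-- Condition (P0): `q` is a symmetric probability distribution supported in
`Λ'_m = Λ_m \ {0}`, with values in [0,1] and equal, positive coordinate variances. -/
def CondP0 (m : ℕ) (qq : ℤ × ℤ → ℝ) : Prop :=
  (∀ x, 0 ≤ qq x ∧ qq x ≤ 1) ∧
  (∀ x, x ∉ (Lam m).erase 0 → qq x = 0) ∧
  (∑ x ∈ (Lam m).erase 0, qq x = 1) ∧
  (∀ x, qq (-x) = qq x) ∧
  (∑ x ∈ Lam m, (x.1 : ℝ) ^ 2 * qq x = ∑ x ∈ Lam m, (x.2 : ℝ) ^ 2 * qq x) ∧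
  (0 < ∑ x ∈ Lam m, (x.1 : ℝ) ^ 2 * qq x)

/-- Condition (P1) with constant `σ² = σ2`. -/
def CondP1 (M : ℕ → ℕ) (q : ℕ → ℤ × ℤ → ℝ) (σ2 : ℝ) : Prop :=
  ∀ ε > (0 : ℝ), ∃ δ > (0 : ℝ), ∀ᶠ L in evenAtTop, ∀ θ : ℝ × ℝ, θ ≠ 0 →
    supNorm θ ≤ δ / M L →
    (1 - phiOf (M L) (q L) θ) / (σ2 * (M L : ℝ) ^ 2 * sqNormR θ / 2)
      ∈ Set.Ioo (1 - ε) (1 + ε)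

/-- Condition (P2). -/
def CondP2 (M : ℕ → ℕ) (q : ℕ → ℤ × ℤ → ℝ) : Prop :=
  ∀ δ > (0 : ℝ), ∃ δ' > (0 : ℝ), ∃ ζ > (0 : ℝ), ∀ᶠ L in evenAtTop, ∀ θ : ℝ × ℝ,
    supNorm θ ≤ δ' → ¬ supNorm θ ≤ δ / M L → 1 - phiOf (M L) (q L) θ > ζ

/-- Condition (P3). -/
def CondP3 (M : ℕ → ℕ) (q : ℕ → ℤ × ℤ → ℝ) : Prop :=
  ∀ ε > (0 : ℝ), ∀ a > (0 : ℝ), ∀ᶠ L in evenAtTop, ∀ θ : ℝ × ℝ,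
    supNorm θ ≤ π → ¬ supNorm θ ≤ a → |phiOf (M L) (q L) θ| < ε

/-- `G_L(x,λ) = L⁻² ∑_{y ∈ T_L} e^{2πi x·y/L} / (1 + λ − φ_{M_L}(2πy/L))`. -/
def Gfun (M : ℕ → ℕ) (q : ℕ → ℤ × ℤ → ℝ) (L : ℕ) (x : ℤ × ℤ) (lam : ℝ) : ℂ :=
  ((L : ℂ) ^ 2)⁻¹ * ∑ y ∈ Tset L,
    eL L x y / ((1 + lam - phiOf (M L) (q L) (fourierTheta L y) : ℝ) : ℂ)

open scoped Classical in
/-- the annulus `A_L(α, v)`. -/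
def Aset (L : ℕ) (α v : ℝ) : Finset (ℤ × ℤ) :=
  if α = 0 then (Tset v).erase 0
  else if α = 1 then Tset L \ Tset (L / v)
  else Tset ((L : ℝ) ^ α * v) \ Tset ((L : ℝ) ^ α / v)

/-- the uniform distribution `u_m` on `Λ'_m = Λ_m \ {0}`. -/
def uunif (m : ℕ) (x : ℤ × ℤ) : ℝ :=
  if x ∈ (Lam m).erase 0 then (((Lam m).erase 0).card : ℝ)⁻¹ else 0

/-- `q_M(x) = c_M f(x/M) u_M(x)`. -/
def qMf (f : ℝ × ℝ → ℝ) (c : ℕ → ℝ) (m : ℕ) (x : ℤ × ℤ) : ℝ :=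
  c m * f ((x.1 : ℝ) / m, (x.2 : ℝ) / m) * uunif m x

/-!
Normalisation gives `c_M ≥ 1 / max f`, so `q_M ≥ κ / |Λ'_M| ≥ κ / (4 M²)` on `Λ'_M`, where
`κ = min f / max f`. For `θ` in the annulus write `1 - φ_M(θ) = ∑ q_M(x) (1 - cos θ·x)` and keep
only the centred box `[-B, B]²`, `B = ⌊r M⌋` with `r = min(1/2, 1/A)`: there `|θ·x| ≤ π`, so
`1 - cos θ·x ≥ 2 (θ·x)² / π²`, and `∑_{box} (θ·x)² = |θ|² (2B+1) ∑ j² ≥ |θ|² B⁴`. As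
`|θ| ≥ δ / M` and `B ≥ r M / 2`, this gives `1 - φ_M(θ) ≥ κ δ² r⁴ / (32 π²)`.
-/

lemma supNorm_eq_norm (θ : ℝ × ℝ) : supNorm θ = ‖θ‖ := by
  rw [supNorm, Prod.norm_def, Real.norm_eq_abs, Real.norm_eq_abs]

lemma supNorm_nonneg (θ : ℝ × ℝ) : 0 ≤ supNorm θ :=
  supNorm_eq_norm θ ▸ norm_nonneg θ

lemma Bset_eq_closedBall (r : ℝ) : Bset r = Metric.closedBall 0 r := by
  ext θ; rw [mem_closedBall_zero_iff, ← supNorm_eq_norm]; rfl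

lemma isCompact_Bset (r : ℝ) : IsCompact (Bset r) :=
  Bset_eq_closedBall r ▸ isCompact_closedBall _ _

lemma Bset_diff_Bset_nonempty {s t : ℝ} (hst : s < t) (ht : 0 ≤ t) :
    (Bset t \ Bset s).Nonempty :=
  ⟨(t, 0), by simp [Bset, supNorm, abs_of_nonneg ht, hst, ht]⟩

def latticeBox (B : ℕ) : Finset (ℤ × ℤ) := Icc (-(B : ℤ)) B ×ˢ Icc (-(B : ℤ)) B

lemma sum_Icc_neg_self_eq_zero (B : ℕ) : ∑ j ∈ Icc (-(B : ℤ)) B, (j : ℝ) = 0 := by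
  have h : ∑ j ∈ Icc (-(B : ℤ)) B, (j : ℝ) = ∑ j ∈ Icc (-(B : ℤ)) B, (-j : ℝ) :=
    sum_nbij' (fun j => -j) (fun j => -j) (by simp; omega) (by simp; omega)
      (by simp) (by simp) (by simp)
  rw [sum_neg_distrib] at h
  linarith

lemma sum_Icc_neg_self_sq (B : ℕ) :
    ∑ j ∈ Icc (-(B : ℤ)) B, (j : ℝ) ^ 2 = B * (B + 1) * (2 * B + 1) / 3 := by
  induction B with
  | zero => simp
  | succ B ih =>
    have hsplit : Icc (-((B + 1 : ℕ) : ℤ)) (B + 1 : ℕ) =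
        insert (-((B : ℤ) + 1)) (insert ((B : ℤ) + 1) (Icc (-(B : ℤ)) B)) := by
      ext j; simp only [mem_Icc, mem_insert]; omega
    rw [hsplit, sum_insert (by simp; omega), sum_insert (by simp), ih]
    push_cast; ring

lemma sum_latticeBox_dotP_sq (θ : ℝ × ℝ) (B : ℕ) :
    ∑ x ∈ latticeBox B, dotP θ x ^ 2 =
      sqNormR θ * ((2 * B + 1) * (B * (B + 1) * (2 * B + 1) / 3)) := by
  have hexpand : ∀ x : ℤ × ℤ, dotP θ x ^ 2 =
      θ.1 ^ 2 * (x.1 : ℝ) ^ 2 + θ.2 ^ 2 * (x.2 : ℝ) ^ 2 + 2 * θ.1 * θ.2 * (x.1 * x.2) :=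
    fun x => by unfold dotP; ring
  simp only [hexpand, latticeBox, sum_add_distrib, ← mul_sum, sum_product, ← sum_mul,
    ← mul_sum, sum_const, Int.card_Icc, nsmul_eq_mul, sum_Icc_neg_self_eq_zero,
    sum_Icc_neg_self_sq]
  have hcard : ((B : ℤ) + 1 - -B).toNat = 2 * B + 1 := by omega
  rw [hcard, sqNormR]
  push_cast; ring

lemma sqNormR_mul_pow_four_le (θ : ℝ × ℝ) (B : ℕ) :
    sqNormR θ * B ^ 4 ≤ ∑ x ∈ latticeBox B, dotP θ x ^ 2 := by
  have hθ : 0 ≤ sqNormR θ := by unfold sqNormR; positivity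
  have hB : (0 : ℝ) ≤ B := Nat.cast_nonneg _
  rw [sum_latticeBox_dotP_sq]
  gcongr
  nlinarith [pow_nonneg hB 3, pow_nonneg hB 2]

lemma floor_natCast_div_two (m : ℕ) : ⌊(m : ℝ) / 2⌋ = ((m / 2 : ℕ) : ℤ) := by
  have h := Int.floor_div_natCast (m : ℝ) 2
  push_cast at h
  rw [h, Int.floor_natCast]; omega

lemma Lam_natCast (m : ℕ) : Lam m = latticeBox (m / 2) := by
  rw [Lam, latticeBox, neg_div, Int.ceil_neg, floor_natCast_div_two]

lemma latticeBox_subset_Lam {B m : ℕ} (h : B ≤ m / 2) : latticeBox B ⊆ Lam m := by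
  rw [Lam_natCast, latticeBox, latticeBox]
  exact product_subset_product (Icc_subset_Icc (by omega) (by omega))
    (Icc_subset_Icc (by omega) (by omega))

lemma card_Lam_le (m : ℕ) : ((Lam m).card : ℝ) ≤ (m + 1) ^ 2 := by
  rw [Lam_natCast, latticeBox, card_product, Int.card_Icc]
  have h : ((m / 2 : ℕ) + 1 - -((m / 2 : ℕ) : ℤ)).toNat ≤ m + 1 := by omega
  exact_mod_cast Nat.mul_le_mul h h |>.trans_eq (sq _).symm

lemma div_mem_Bset_of_mem_Lam {m : ℕ} (hm : 0 < m) {x : ℤ × ℤ} (hx : x ∈ Lam m) :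
    ((x.1 : ℝ) / m, (x.2 : ℝ) / m) ∈ Bset (1 / 2) := by
  rw [Lam_natCast, latticeBox, mem_product, mem_Icc, mem_Icc] at hx
  have hm' : (0 : ℝ) < m := by exact_mod_cast hm
  have bound : ∀ j : ℤ, -((m / 2 : ℕ) : ℤ) ≤ j → j ≤ (m / 2 : ℕ) → |(j : ℝ) / m| ≤ 1 / 2 := by
    intro j hlo hhi
    rw [abs_div, abs_of_pos hm', div_le_iff₀ hm', abs_le]
    have hlo' : -(m : ℤ) ≤ 2 * j := by omega
    have hhi' : 2 * j ≤ (m : ℤ) := by omega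
    constructor
    · have : (-(m : ℤ) : ℝ) ≤ ((2 * j : ℤ) : ℝ) := by exact_mod_cast hlo'
      push_cast at this; linarith
    · have : ((2 * j : ℤ) : ℝ) ≤ ((m : ℤ) : ℝ) := by exact_mod_cast hhi'
      push_cast at this; linarith
  exact max_le (bound _ hx.1.1 hx.1.2) (bound _ hx.2.1 hx.2.2)

lemma sq_supNorm_le_sqNormR (θ : ℝ × ℝ) : supNorm θ ^ 2 ≤ sqNormR θ := by
  rw [supNorm, sqNormR]
  rcases le_total |θ.1| |θ.2| with h | h
  · rw [max_eq_right h, sq_abs]; nlinarith [sq_nonneg θ.1]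
  · rw [max_eq_left h, sq_abs]; nlinarith [sq_nonneg θ.2]

lemma abs_dotP_le_of_mem_latticeBox (θ : ℝ × ℝ) {B : ℕ} {x : ℤ × ℤ} (hx : x ∈ latticeBox B) :
    |dotP θ x| ≤ 2 * (supNorm θ * B) := by
  rw [latticeBox, mem_product, mem_Icc, mem_Icc] at hx
  have coord : ∀ j : ℤ, -(B : ℤ) ≤ j → j ≤ B → |(j : ℝ)| ≤ B := fun j hlo hhi =>
    abs_le.2 ⟨by exact_mod_cast hlo, by exact_mod_cast hhi⟩
  calc |dotP θ x| ≤ |θ.1| * |(x.1 : ℝ)| + |θ.2| * |(x.2 : ℝ)| := by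
        rw [dotP, ← abs_mul, ← abs_mul]; exact abs_add_le _ _
    _ ≤ supNorm θ * B + supNorm θ * B := by
        have hsup := supNorm_nonneg θ
        gcongr
        exacts [le_max_left |θ.1| |θ.2|, coord _ hx.1.1 hx.1.2, le_max_right |θ.1| |θ.2|,
          coord _ hx.2.1 hx.2.2]
    _ = 2 * (supNorm θ * B) := by ring

lemma phiOf_eq_sum_cos (m : ℕ) (q : ℤ × ℤ → ℝ) (θ : ℝ × ℝ) :
    phiOf m q θ = ∑ x ∈ Lam m, q x * Real.cos (dotP θ x) := by
  rw [phiOf, Complex.re_sum]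
  refine sum_congr rfl fun x _ => ?_
  rw [cexp, mul_comm Complex.I, Complex.re_mul_ofReal, Complex.exp_ofReal_mul_I_re, mul_comm]

section ProbabilityDistribution

variable {m : ℕ} {q : ℤ × ℤ → ℝ}

lemma one_sub_phiOf_eq_sum (hsum : ∑ x ∈ Lam m, q x = 1) (θ : ℝ × ℝ) :
    1 - phiOf m q θ = ∑ x ∈ Lam m, q x * (1 - Real.cos (dotP θ x)) := by
  simp only [phiOf_eq_sum_cos, mul_sub, mul_one, sum_sub_distrib, hsum]

lemma neg_one_le_phiOf (hq : ∀ x, 0 ≤ q x) (hsum : ∑ x ∈ Lam m, q x = 1) (θ : ℝ × ℝ) :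
    -1 ≤ phiOf m q θ := by
  have h : ∑ x ∈ Lam m, q x * (1 - Real.cos (dotP θ x)) ≤ ∑ x ∈ Lam m, q x * 2 :=
    sum_le_sum fun x _ => mul_le_mul_of_nonneg_left (by linarith [neg_one_le_cos (dotP θ x)]) (hq x)
  rw [← sum_mul, hsum, ← one_sub_phiOf_eq_sum hsum] at h
  linarith

lemma one_sub_phiOf_ge (hq : ∀ x, 0 ≤ q x) (hsum : ∑ x ∈ Lam m, q x = 1) {B : ℕ}
    (hB : latticeBox B ⊆ Lam m) {ε : ℝ}
    (hqε : ∀ x ∈ latticeBox B, x ≠ 0 → ε ≤ q x) {θ : ℝ × ℝ} (hθ : supNorm θ * B ≤ 1) :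
    2 / π ^ 2 * ε * ∑ x ∈ latticeBox B, dotP θ x ^ 2 ≤ 1 - phiOf m q θ := by
  rw [one_sub_phiOf_eq_sum hsum, mul_sum]
  have one_sub_cos_nonneg : ∀ x, 0 ≤ 1 - Real.cos (dotP θ x) := fun x =>
    sub_nonneg.2 (cos_le_one _)
  calc ∑ x ∈ latticeBox B, 2 / π ^ 2 * ε * dotP θ x ^ 2
      ≤ ∑ x ∈ latticeBox B, q x * (1 - Real.cos (dotP θ x)) := by
        refine sum_le_sum fun x hx => ?_
        by_cases hx0 : x = 0
        · simp [hx0, dotP]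
        have hπ : |dotP θ x| ≤ π := by
          linarith [abs_dotP_le_of_mem_latticeBox θ hx, pi_gt_three]
        have hcos := cos_le_one_sub_mul_cos_sq hπ
        calc 2 / π ^ 2 * ε * dotP θ x ^ 2 = ε * (2 / π ^ 2 * dotP θ x ^ 2) := by ring
          _ ≤ q x * (1 - Real.cos (dotP θ x)) :=
            mul_le_mul (hqε x hx hx0) (by linarith) (by positivity) (hq x)
    _ ≤ ∑ x ∈ Lam m, q x * (1 - Real.cos (dotP θ x)) :=
        sum_le_sum_of_subset_of_nonneg hB fun x _ _ => mul_nonneg (hq x) (one_sub_cos_nonneg x)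

end ProbabilityDistribution

lemma IsCompact.exists_bounds_of_pos {X : Type*} [TopologicalSpace X] {K : Set X}
    (hK : IsCompact K) {f : X → ℝ} (hf : ContinuousOn f K) (hpos : ∀ x ∈ K, 0 < f x) :
    ∃ a b : ℝ, 0 < a ∧ (∀ x ∈ K, a ≤ f x) ∧ ∀ x ∈ K, f x ≤ b := by
  rcases K.eq_empty_or_nonempty with rfl | hne
  · exact ⟨1, 1, one_pos, by simp, by simp⟩
  obtain ⟨x₀, hx₀, hmin⟩ := hK.exists_isMinOn hne hf
  obtain ⟨b, hb⟩ := hK.bddAbove_image hf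
  exact ⟨f x₀, b, hpos x₀ hx₀, fun x hx => hmin hx, fun x hx => hb ⟨x, hx, rfl⟩⟩

lemma exists_nat_le_half_and_near_mul {r : ℝ} {m : ℕ} (hr : r ≤ 1 / 2) (hrm : 2 ≤ r * m) :
    ∃ B : ℕ, B ≤ m / 2 ∧ r * m / 2 ≤ B ∧ (B : ℝ) ≤ r * m := by
  refine ⟨⌊r * m⌋₊, ?_, by linarith [Nat.lt_floor_add_one (r * m)], Nat.floor_le (by linarith)⟩
  rw [← Nat.floor_div_eq_div (K := ℝ)]
  exact Nat.floor_le_floor (by push_cast; nlinarith)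

section Normalization

variable {f : ℝ × ℝ → ℝ} {c : ℕ → ℝ} {m : ℕ}

lemma qMf_eq_zero_of_notMem {x : ℤ × ℤ} (hx : x ∉ (Lam m).erase 0) : qMf f c m x = 0 := by
  rw [qMf, uunif, if_neg hx, mul_zero]

lemma qMf_eq_of_mem {x : ℤ × ℤ} (hx : x ∈ (Lam m).erase 0) :
    qMf f c m x = c m * f ((x.1 : ℝ) / m, (x.2 : ℝ) / m) / ((Lam m).erase 0).card := by
  rw [qMf, uunif, if_pos hx, ← div_eq_mul_inv]

lemma sum_Lam_qMf (hc : ∑ x ∈ (Lam m).erase 0, qMf f c m x = 1) :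
    ∑ x ∈ Lam m, qMf f c m x = 1 := by
  rwa [← sum_subset (erase_subset 0 (Lam m)) fun x _ hx => qMf_eq_zero_of_notMem hx]

lemma sum_uunif_le_one (m : ℕ) : ∑ x ∈ (Lam m).erase 0, uunif m x ≤ 1 := by
  rw [sum_congr rfl fun x hx => by rw [uunif, if_pos hx], sum_const, nsmul_eq_mul]
  exact mul_inv_le_one

lemma uunif_nonneg (m : ℕ) (x : ℤ × ℤ) : 0 ≤ uunif m x := by
  unfold uunif; split_ifs <;> positivity

lemma sum_qMf_eq_mul (f : ℝ × ℝ → ℝ) (c : ℕ → ℝ) (m : ℕ) :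
    ∑ x ∈ (Lam m).erase 0, qMf f c m x =
      c m * ∑ x ∈ (Lam m).erase 0, f ((x.1 : ℝ) / m, (x.2 : ℝ) / m) * uunif m x := by
  rw [mul_sum]; exact sum_congr rfl fun x _ => by rw [qMf, mul_assoc]

lemma normalizer_pos (hf : ∀ x ∈ Bset (1 / 2), 0 ≤ f x) (hm : 0 < m)
    (hc : ∑ x ∈ (Lam m).erase 0, qMf f c m x = 1) : 0 < c m := by
  rw [sum_qMf_eq_mul] at hc
  have hS : 0 ≤ ∑ x ∈ (Lam m).erase 0, f ((x.1 : ℝ) / m, (x.2 : ℝ) / m) * uunif m x :=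
    sum_nonneg fun x hx => mul_nonneg
      (hf _ (div_mem_Bset_of_mem_Lam hm (mem_of_mem_erase hx))) (uunif_nonneg m x)
  by_contra! hc0
  linarith [mul_nonpos_of_nonpos_of_nonneg hc0 hS]

lemma inv_le_normalizer {b : ℝ} (hf : ∀ x ∈ Bset (1 / 2), 0 ≤ f x)
    (hfb : ∀ x ∈ Bset (1 / 2), f x ≤ b) (hb : 0 < b) (hm : 0 < m)
    (hc : ∑ x ∈ (Lam m).erase 0, qMf f c m x = 1) : b⁻¹ ≤ c m := by
  have hcm := normalizer_pos hf hm hc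
  have hS : ∑ x ∈ (Lam m).erase 0, f ((x.1 : ℝ) / m, (x.2 : ℝ) / m) * uunif m x ≤ b :=
    calc _ ≤ ∑ x ∈ (Lam m).erase 0, b * uunif m x :=
          sum_le_sum fun x hx => mul_le_mul_of_nonneg_right
            (hfb _ (div_mem_Bset_of_mem_Lam hm (mem_of_mem_erase hx))) (uunif_nonneg m x)
      _ ≤ b := by rw [← mul_sum]; exact mul_le_of_le_one_right hb.le (sum_uunif_le_one m)
  rw [sum_qMf_eq_mul] at hc
  rw [inv_le_iff_one_le_mul₀ hb, ← hc]
  exact mul_le_mul_of_nonneg_left hS hcm.le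

lemma qMf_nonneg (hf : ∀ x ∈ Bset (1 / 2), 0 ≤ f x) (hm : 0 < m)
    (hc : ∑ x ∈ (Lam m).erase 0, qMf f c m x = 1) (x : ℤ × ℤ) : 0 ≤ qMf f c m x := by
  by_cases hx : x ∈ (Lam m).erase 0
  · rw [qMf_eq_of_mem hx]
    exact div_nonneg (mul_nonneg (normalizer_pos hf hm hc).le
      (hf _ (div_mem_Bset_of_mem_Lam hm (mem_of_mem_erase hx)))) (Nat.cast_nonneg _)
  · rw [qMf_eq_zero_of_notMem hx]

lemma le_qMf {a b : ℝ} (ha : 0 ≤ a) (hb : 0 < b) (hf : ∀ x ∈ Bset (1 / 2), a ≤ f x)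
    (hm : 0 < m) (hcm : b⁻¹ ≤ c m) {x : ℤ × ℤ} (hx : x ∈ (Lam m).erase 0) :
    a / (b * (m + 1) ^ 2) ≤ qMf f c m x := by
  have hN : 0 < ((Lam m).erase 0).card := card_pos.2 ⟨x, hx⟩
  have hNle : (((Lam m).erase 0).card : ℝ) ≤ (m + 1) ^ 2 :=
    (Nat.cast_le.2 (card_erase_le)).trans (card_Lam_le m)
  have hfx : a ≤ f ((x.1 : ℝ) / m, (x.2 : ℝ) / m) :=
    hf _ (div_mem_Bset_of_mem_Lam hm (mem_of_mem_erase hx))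
  have hcf : b⁻¹ * a ≤ c m * f ((x.1 : ℝ) / m, (x.2 : ℝ) / m) :=
    mul_le_mul hcm hfx ha ((inv_pos.2 hb).le.trans hcm)
  rw [qMf_eq_of_mem hx]
  calc a / (b * (m + 1) ^ 2) = b⁻¹ * a / (m + 1) ^ 2 := by rw [div_mul_eq_div_div_swap]; ring
    _ ≤ _ := div_le_div₀ ((mul_nonneg (inv_pos.2 hb).le ha).trans hcf) hcf
        (Nat.cast_pos.2 hN) hNle

end Normalization

lemma phiOf_qMf_le_of_mem_annulus {f : ℝ × ℝ → ℝ} {c : ℕ → ℝ} {a b δ A r : ℝ} (ha : 0 < a)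
    (hb : 0 < b) (hfa : ∀ x ∈ Bset (1 / 2), a ≤ f x) (hfb : ∀ x ∈ Bset (1 / 2), f x ≤ b)
    {m : ℕ} (hm : 0 < m)
    (hc : ∑ x ∈ (Lam m).erase 0, qMf f c m x = 1) (hδ : 0 < δ) (hr : r ≤ 1 / 2)
    (hrA : A * r ≤ 1) (hrm : 2 ≤ r * m) {θ : ℝ × ℝ} (hθ : θ ∈ Bset (A / m) \ Bset (δ / m)) :
    phiOf m (qMf f c m) θ ≤ 1 - a * δ ^ 2 * r ^ 4 / (32 * π ^ 2 * b) := by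
  have hθA : supNorm θ ≤ A / m := hθ.1
  have hθδ : δ / m < supNorm θ := lt_of_not_ge hθ.2
  have hf0 : ∀ x ∈ Bset (1 / 2), 0 ≤ f x := fun x hx => ha.le.trans (hfa x hx)
  obtain ⟨B, hBm, hB_ge, hB_le⟩ := exists_nat_le_half_and_near_mul hr hrm
  have hθB : supNorm θ * B ≤ 1 :=
    calc supNorm θ * B ≤ A / m * (r * m) :=
          mul_le_mul hθA hB_le (Nat.cast_nonneg _) ((supNorm_nonneg θ).trans hθA)
      _ = A * r := by field_simp
      _ ≤ 1 := hrA
  have key := one_sub_phiOf_ge (qMf_nonneg hf0 hm hc) (sum_Lam_qMf hc)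
    (latticeBox_subset_Lam hBm) (fun x hx hx0 => le_qMf ha.le hb hfa hm
      (inv_le_normalizer hf0 hfb hb hm hc) (mem_erase.2 ⟨hx0, latticeBox_subset_Lam hBm hx⟩)) hθB
  have hsq : (δ / m) ^ 2 ≤ sqNormR θ :=
    (pow_le_pow_left₀ (by positivity) hθδ.le 2).trans (sq_supNorm_le_sqNormR θ)
  have hsq0 : 0 ≤ sqNormR θ := (sq_nonneg _).trans hsq
  have hε : a / (4 * b * m ^ 2) ≤ a / (b * (m + 1) ^ 2) := by
    have hm1 : (1 : ℝ) ≤ m := Nat.one_le_cast.2 hm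
    have hm_sq : ((m : ℝ) + 1) ^ 2 ≤ 4 * m ^ 2 := by nlinarith
    exact div_le_div_of_nonneg_left ha.le (by positivity) (by nlinarith)
  suffices a * δ ^ 2 * r ^ 4 / (32 * π ^ 2 * b) ≤ 1 - phiOf m (qMf f c m) θ by linarith
  calc a * δ ^ 2 * r ^ 4 / (32 * π ^ 2 * b)
      = 2 / π ^ 2 * (a / (4 * b * m ^ 2)) * ((δ / m) ^ 2 * (r * m / 2) ^ 4) := by
        field_simp; ring
    _ ≤ 2 / π ^ 2 * (a / (b * (m + 1) ^ 2)) * (sqNormR θ * B ^ 4) := by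
        gcongr
    _ ≤ 2 / π ^ 2 * (a / (b * (m + 1) ^ 2)) * ∑ x ∈ latticeBox B, dotP θ x ^ 2 := by
        gcongr; exact sqNormR_mul_pow_four_le θ B
    _ ≤ 1 - phiOf m (qMf f c m) θ := key

instance evenAtTop_neBot : evenAtTop.NeBot := by
  refine inf_principal_neBot_iff.2 fun U hU => ?_
  obtain ⟨N, hN⟩ := mem_atTop_sets.1 hU
  exact ⟨2 * N, hN _ (by omega), even_two_mul N⟩

lemma eventually_evenAtTop_pos_and_le_mul {r : ℝ} (hr : 0 < r) :
    ∀ᶠ m : ℕ in evenAtTop, Even m ∧ 0 < m ∧ 2 ≤ r * m := by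
  rw [evenAtTop, eventually_inf_principal]
  filter_upwards [eventually_gt_atTop 0, eventually_ge_atTop ⌈2 / r⌉₊] with m hm0 hm heven
  refine ⟨heven, hm0, ?_⟩
  rw [← div_le_iff₀' hr]
  exact (Nat.le_ceil _).trans (Nat.cast_le.2 hm)

lemma limsup_sSup_image_le {ι α : Type*} {l : Filter ι} [l.NeBot] {g : ι → α → ℝ}
    {S : ι → Set α} {d c : ℝ} (hne : ∀ᶠ i in l, (S i).Nonempty)
    (hlow : ∀ᶠ i in l, ∀ x ∈ S i, d ≤ g i x) (hup : ∀ᶠ i in l, ∀ x ∈ S i, g i x ≤ c) :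
    limsup (fun i => sSup (g i '' S i)) l ≤ c := by
  have hev : ∀ᶠ i in l, d ≤ sSup (g i '' S i) ∧ sSup (g i '' S i) ≤ c := by
    filter_upwards [hne, hlow, hup] with i hne hlow hup
    obtain ⟨x, hx⟩ := hne
    have hbdd : BddAbove (g i '' S i) := ⟨c, Set.forall_mem_image.2 hup⟩
    exact ⟨le_csSup_of_le hbdd (Set.mem_image_of_mem _ hx) (hlow x hx),
      csSup_le (Set.image_nonempty.2 ⟨x, hx⟩) (Set.forall_mem_image.2 hup)⟩
  exact limsup_le_of_le (isCoboundedUnder_le_of_eventually_le l (hev.mono fun _ h => h.1))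
    (hev.mono fun _ h => h.2)

theorem prop_suff_P2_general (f : ℝ × ℝ → ℝ) (c : ℕ → ℝ)
    (hfpos : ∀ x ∈ Bset (1 / 2), 0 < f x)
    (hfcont : ContinuousOn f (Bset (1 / 2)))
    (hcsum : ∀ m : ℕ, Even m → 0 < m → ∑ x ∈ (Lam m).erase 0, qMf f c m x = 1) :
    ∀ δ A : ℝ, 0 < δ → δ < A →
      ∃ ζ > (0 : ℝ),
        Filter.limsup
            (fun m : ℕ => sSup (phiOf m (qMf f c m) '' (Bset (A / m) \ Bset (δ / m))))
            evenAtTop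
          ≤ 1 - ζ := by
  intro δ A hδ hδA
  have hA : 0 < A := hδ.trans hδA
  obtain ⟨a, b, ha, hfa, hfb⟩ := (isCompact_Bset _).exists_bounds_of_pos hfcont hfpos
  have hf0 : ∀ x ∈ Bset (1 / 2), 0 ≤ f x := fun x hx => (hfpos x hx).le
  have h0 : (0 : ℝ × ℝ) ∈ Bset (1 / 2) := by simp [Bset, supNorm]
  have hb : 0 < b := (hfpos 0 h0).trans_le (hfb 0 h0)
  set r := min (1 / 2) A⁻¹
  have hr : 0 < r := lt_min one_half_pos (inv_pos.2 hA)
  have hrA : A * r ≤ 1 := (mul_le_mul_of_nonneg_left (min_le_right _ _) hA.le).trans_eq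
    (mul_inv_cancel₀ hA.ne')
  refine ⟨a * δ ^ 2 * r ^ 4 / (32 * π ^ 2 * b), by positivity, ?_⟩
  have hlarge := eventually_evenAtTop_pos_and_le_mul hr
  apply limsup_sSup_image_le (d := -1)
  · filter_upwards [hlarge] with m ⟨_, hm, _⟩
    exact Bset_diff_Bset_nonempty (by gcongr) (by positivity)
  · filter_upwards [hlarge] with m ⟨heven, hm, _⟩ θ _
    have hc := hcsum m heven hm
    exact neg_one_le_phiOf (qMf_nonneg hf0 hm hc) (sum_Lam_qMf hc) θ
  · filter_upwards [hlarge] with m ⟨heven, hm, hrm⟩ θ hθ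
    exact phiOf_qMf_le_of_mem_annulus ha hb hfa hfb hm (hcsum m heven hm) hδ (min_le_left _ _)
      hrA hrm hθ

/-- Property (P2) for the distributions `q_M(x) = c_M f(x/M) u_M(x)`:
for all `0 < δ < A < ∞` there exists `ζ > 0` with
`limsup_{M→∞} sup_{θ ∈ B(A/M)\B(δ/M)} φ_M(θ) ≤ 1 − ζ`. -/
theorem prop_suff_P2 (f : ℝ × ℝ → ℝ) (c : ℕ → ℝ)
    (hfpos : ∀ x ∈ Bset (1 / 2), 0 < f x)
    (hfcont : ContinuousOn f (Bset (1 / 2)))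
    (hfsym1 : ∀ x ∈ Bset (1 / 2), f (x.1, x.2) = f (x.2, x.1))
    (hfsym2 : ∀ x ∈ Bset (1 / 2), f (x.1, x.2) = f (-x.1, x.2))
    (hcpos : ∀ m : ℕ, Even m → 0 < m → 0 < c m)
    (hcsum : ∀ m : ℕ, Even m → 0 < m → ∑ x ∈ (Lam m).erase 0, qMf f c m x = 1) :
    ∀ δ A : ℝ, 0 < δ → δ < A →
      ∃ ζ > (0 : ℝ),
        Filter.limsup
            (fun m : ℕ => sSup (phiOf m (qMf f c m) '' (Bset (A / m) \ Bset (δ / m))))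
            evenAtTop
          ≤ 1 - ζ :=
  prop_suff_P2_general f c hfpos hfcont hcsum
end
end
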